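/- arXiv:2311.09421 — 3 statements merged into one kernel-verified Lean document; each statement's English description precedes it below -/
import Mathlib

section
/- In the free group on a, b and for |n| ≥ 2: the element a^{-1} b^n a b^n (b^n a)^p is conjugate to (b^{2n} a)² (b^n a)^{p-2}; in particular for p = 2 it is conjugate to (b^{2n}a)², a proper power. -/
/-! Conjugating by `b^n a` turns the leading `a⁻¹` into `b^n`, which merges with the following
`b^n` into `b^{2n}`; the identity holds in every group, and for `p = 2` the conjugate of the
square `(b^{2n} a)²` is again a square. -/

lemma conj_bpow_mul_eq {G : Type*} [Group G] (a b : G) (n p : ℤ) :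
    (b ^ n * a) * (a⁻¹ * b ^ n * a * b ^ n * (b ^ n * a) ^ p) * (b ^ n * a)⁻¹ =
      (b ^ (2 * n) * a) ^ 2 * (b ^ n * a) ^ (p - 2) := by
  calc (b ^ n * a) * (a⁻¹ * b ^ n * a * b ^ n * (b ^ n * a) ^ p) * (b ^ n * a)⁻¹
      = b ^ (2 * n) * a * b ^ n * (b ^ n * a) ^ (p - 1) := by
        rw [zpow_sub_one]; group
    _ = (b ^ (2 * n) * a) ^ 2 * (b ^ n * a) ^ (p - 2) := by
        rw [show p - 1 = 1 + (p - 2) by ring, zpow_add, zpow_one, ← mul_assoc]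
        congr 1
        rw [sq]; group

lemma exists_eq_pow_of_isConj_pow {G : Type*} [Group G] {x y : G} {m : ℕ}
    (h : IsConj x (y ^ m)) : ∃ w, x = w ^ m := by
  obtain ⟨c, hc⟩ := isConj_iff.mp h
  exact ⟨c⁻¹ * y * c⁻¹⁻¹, by rw [conj_pow, ← hc]; group⟩

theorem stmt_6_general (n : ℤ) (p : ℤ)
    (a b : FreeGroup (Fin 2)) :
    IsConj (a⁻¹ * b ^ n * a * b ^ n * (b ^ n * a) ^ p)
        ((b ^ (2 * n) * a) ^ 2 * (b ^ n * a) ^ (p - 2)) ∧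
      (p = 2 →
        IsConj (a⁻¹ * b ^ n * a * b ^ n * (b ^ n * a) ^ p) ((b ^ (2 * n) * a) ^ 2) ∧
        ∃ (w : FreeGroup (Fin 2)) (m : ℕ), 2 ≤ m ∧
          a⁻¹ * b ^ n * a * b ^ n * (b ^ n * a) ^ p = w ^ m) := by
  have hconj := isConj_iff.mpr ⟨b ^ n * a, conj_bpow_mul_eq a b n p⟩
  refine ⟨hconj, fun hp => ?_⟩
  subst hp
  rw [sub_self, zpow_zero, mul_one] at hconj
  obtain ⟨w, hw⟩ := exists_eq_pow_of_isConj_pow hconj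
  exact ⟨hconj, w, 2, le_rfl, hw⟩

/-- In the free group on `a`, `b`, for `|n| ≥ 2`: the element `a⁻¹ b^n a b^n (b^n a)^p`
is conjugate to `(b^{2n} a)² (b^n a)^{p-2}`; in particular for `p = 2` it is conjugate to
`(b^{2n} a)²`, a proper power. -/
theorem stmt_6 (n : ℤ) (hn : 2 ≤ |n|) (p : ℤ)
    (a b : FreeGroup (Fin 2)) (ha : a = FreeGroup.of 0) (hb : b = FreeGroup.of 1) :
    IsConj (a⁻¹ * b ^ n * a * b ^ n * (b ^ n * a) ^ p)
        ((b ^ (2 * n) * a) ^ 2 * (b ^ n * a) ^ (p - 2)) ∧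
      (p = 2 →
        IsConj (a⁻¹ * b ^ n * a * b ^ n * (b ^ n * a) ^ p) ((b ^ (2 * n) * a) ^ 2) ∧
        ∃ (w : FreeGroup (Fin 2)) (m : ℕ), 2 ≤ m ∧
          a⁻¹ * b ^ n * a * b ^ n * (b ^ n * a) ^ p = w ^ m) :=
  stmt_6_general n p a b
end

section
/- In the free group ⟨x,y⟩, the element (x y^q)³ y^ε is primitive for every integer q ≥ 1 and ε ∈ {1,-1}. -/
/-!
Put `a = x y^q`. The substitution `x ↦ x y^q` is a Nielsen automorphism carrying `x³ y^ε` to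
`a³ y^ε`, so it suffices that `x³ y^ε` is primitive. Up to inverting `y`, this is `x³ y`, the image
of the generator `y` under the Nielsen automorphism `y ↦ x³ y`.
-/

/-- An element of the free group of rank 2 is primitive if it is part of some free basis,
equivalently it is the image of a standard generator under an automorphism. -/
def IsPrimitiveF2 (w : FreeGroup (Fin 2)) : Prop :=
  ∃ e : FreeGroup (Fin 2) ≃* FreeGroup (Fin 2), e (FreeGroup.of 0) = w

namespace FreeGroup

variable {α : Type*}

def liftMulEquiv (f g : α → FreeGroup α) (hgf : ∀ a, lift g (f a) = of a)
    (hfg : ∀ a, lift f (g a) = of a) : FreeGroup α ≃* FreeGroup α :=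
  MonoidHom.toMulEquiv (lift f) (lift g) (ext_hom _ _ fun a => by simpa using hgf a)
    (ext_hom _ _ fun a => by simpa using hfg a)

@[simp]
theorem liftMulEquiv_apply (f g : α → FreeGroup α) (hgf hfg) (w : FreeGroup α) :
    liftMulEquiv f g hgf hfg w = lift f w :=
  rfl

variable [DecidableEq α]

def invertGenerator (i : α) : FreeGroup α ≃* FreeGroup α :=
  liftMulEquiv (Function.update of i (of i)⁻¹) (Function.update of i (of i)⁻¹)
    (fun a => by by_cases h : a = i <;> simp [Function.update, h])
    (fun a => by by_cases h : a = i <;> simp [Function.update, h])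

@[simp]
theorem invertGenerator_of_self (i : α) : invertGenerator i (of i) = (of i)⁻¹ := by
  simp [invertGenerator]

@[simp]
theorem invertGenerator_of_of_ne {i j : α} (h : j ≠ i) : invertGenerator i (of j) = of j := by
  simp [invertGenerator, h]

def transvectionRight {i j : α} (hij : i ≠ j) (n : ℤ) : FreeGroup α ≃* FreeGroup α :=
  liftMulEquiv (Function.update of i (of i * of j ^ n)) (Function.update of i (of i * of j ^ (-n)))
    (fun a => by by_cases h : a = i <;> simp [Function.update, h, hij.symm])
    (fun a => by by_cases h : a = i <;> simp [Function.update, h, hij.symm])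

@[simp]
theorem transvectionRight_of_self {i j : α} (hij : i ≠ j) (n : ℤ) :
    transvectionRight hij n (of i) = of i * of j ^ n := by
  simp [transvectionRight]

@[simp]
theorem transvectionRight_of_right {i j : α} (hij : i ≠ j) (n : ℤ) :
    transvectionRight hij n (of j) = of j := by
  simp [transvectionRight, hij.symm]

def transvectionLeft {i j : α} (hij : i ≠ j) (n : ℤ) : FreeGroup α ≃* FreeGroup α :=
  liftMulEquiv (Function.update of i (of j ^ n * of i)) (Function.update of i (of j ^ (-n) * of i))
    (fun a => by by_cases h : a = i <;> simp [Function.update, h, hij.symm])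
    (fun a => by by_cases h : a = i <;> simp [Function.update, h, hij.symm])

@[simp]
theorem transvectionLeft_of_self {i j : α} (hij : i ≠ j) (n : ℤ) :
    transvectionLeft hij n (of i) = of j ^ n * of i := by
  simp [transvectionLeft]

@[simp]
theorem transvectionLeft_of_right {i j : α} (hij : i ≠ j) (n : ℤ) :
    transvectionLeft hij n (of j) = of j := by
  simp [transvectionLeft, hij.symm]

end FreeGroup

open FreeGroup

theorem IsPrimitiveF2.map {w : FreeGroup (Fin 2)} (hw : IsPrimitiveF2 w)
    (e : FreeGroup (Fin 2) ≃* FreeGroup (Fin 2)) : IsPrimitiveF2 (e w) := by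
  obtain ⟨f, rfl⟩ := hw
  exact ⟨f.trans e, rfl⟩

theorem isPrimitiveF2_of (i : Fin 2) : IsPrimitiveF2 (of i) :=
  ⟨freeGroupCongr (Equiv.swap 0 i), by simp [freeGroupCongr]⟩

theorem isPrimitiveF2_zpow_mul_zpow (n ε : ℤ) (hε : ε = 1 ∨ ε = -1) :
    IsPrimitiveF2 (of 0 ^ n * of 1 ^ ε) := by
  have hx : IsPrimitiveF2 (of 0 ^ n * of 1) := by
    simpa using (isPrimitiveF2_of 1).map (transvectionLeft (by decide : (1 : Fin 2) ≠ 0) n)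
  rcases hε with rfl | rfl
  · simpa using hx
  · simpa using hx.map (invertGenerator 1)

theorem stmt_11_general (q ε : ℤ) (hε : ε = 1 ∨ ε = -1) :
    IsPrimitiveF2
      (((FreeGroup.of 0 : FreeGroup (Fin 2)) * (FreeGroup.of 1) ^ q) ^ 3 *
        (FreeGroup.of 1) ^ ε) := by
  simpa using (isPrimitiveF2_zpow_mul_zpow 3 ε hε).map
    (transvectionRight (by decide : (0 : Fin 2) ≠ 1) q)

/-- In the free group `⟨x,y⟩`, the element `(x y^q)³ y^ε` is primitive for every integer
`q ≥ 1` and `ε = ±1`. -/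
theorem stmt_11 (q ε : ℤ) (hq : 1 ≤ q) (hε : ε = 1 ∨ ε = -1) :
    IsPrimitiveF2
      (((FreeGroup.of 0 : FreeGroup (Fin 2)) * (FreeGroup.of 1) ^ q) ^ 3 *
        (FreeGroup.of 1) ^ ε) :=
  stmt_11_general q ε hε
end

section
/- In the free group ⟨x,y⟩, if W(x,y) = (y^{p₅} x)^{p₄} y^{q₅} with integers p₄, p₅ ≥ 2 is primitive, then q₅ = ±1. -/
/-!
Killing a primitive element of `F₂ = ⟨x, y⟩` leaves a cyclic group, so every homomorphism that
kills a primitive element has abelian image. If `q₅ ≠ ±1`, send `y` to a scaling `b` of `ℂ` by a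
root of unity `ζ ≠ 1` with `ζ ^ q₅ = 1`, and `y ^ p₅ x` to a rotation `c` about the point `1`
by a root of unity `ξ ≠ 1` with `ξ ^ p₄ = 1`. Then `W ↦ c ^ p₄ b ^ q₅ = 1`, while `b` and `c`
do not commute.
-/

open FreeGroup

lemma commute_of_isPrimitiveF2 {w : FreeGroup (Fin 2)} (hw : IsPrimitiveF2 w)
    {G : Type*} [Group G] (φ : FreeGroup (Fin 2) →* G) (hφw : φ w = 1) :
    Commute (φ (of 0)) (φ (of 1)) := by
  obtain ⟨e, rfl⟩ := hw
  set ψ := φ.comp e.toMonoidHom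
  have hrange : ψ.range ≤ Subgroup.zpowers (ψ (of 1)) := by
    rw [MonoidHom.range_eq_map, ← FreeGroup.closure_range_of, MonoidHom.map_closure,
      Subgroup.closure_le]
    rintro _ ⟨_, ⟨i, rfl⟩, rfl⟩
    fin_cases i
    · simp [ψ, hφw]
    · exact Subgroup.mem_zpowers _
  have hφ : ∀ u, φ u ∈ Subgroup.zpowers (ψ (of 1)) := fun u => hrange ⟨e.symm u, by simp [ψ]⟩
  obtain ⟨m, hm⟩ := hφ (of 0)
  obtain ⟨n, hn⟩ := hφ (of 1)
  rw [← hm, ← hn]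
  exact (Commute.refl _).zpow_zpow m n

lemma not_isPrimitiveF2_of_not_commute {G : Type*} [Group G] {b c : G} (hbc : ¬Commute b c)
    {p₄ : ℕ} {q : ℤ} (hc : c ^ p₄ = 1) (hb : b ^ q = 1) (p₅ : ℕ) :
    ¬IsPrimitiveF2 (((of 1 : FreeGroup (Fin 2)) ^ p₅ * of 0) ^ p₄ * of 1 ^ q) := by
  intro hw
  let φ : FreeGroup (Fin 2) →* G := lift ![(b ^ p₅)⁻¹ * c, b]
  have hφw : φ ((of 1 ^ p₅ * of 0) ^ p₄ * of 1 ^ q) = 1 := by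
    simp [φ, hc, hb]
  have hcomm : Commute ((b ^ p₅)⁻¹ * c) b := by
    simpa [φ] using commute_of_isPrimitiveF2 hw φ hφw
  apply hbc
  simpa using (((Commute.refl b).pow_left p₅).mul_left hcomm).symm

lemma Complex.exists_ne_one_pow_eq_one {n : ℕ} (hn : n ≠ 1) : ∃ ζ : ℂˣ, ζ ≠ 1 ∧ ζ ^ n = 1 := by
  rcases eq_or_ne n 0 with rfl | hn₀
  · exact ⟨-1, by norm_num, pow_zero _⟩
  · have hprim := Complex.isPrimitiveRoot_exp n hn₀
    have hunit := IsPrimitiveRoot.coe_units_iff.mp ((hprim.isUnit hn₀).unit_spec ▸ hprim)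
    exact ⟨_, hunit.ne_one (by omega), hunit.pow_eq_one⟩

lemma exists_not_commute_pow_eq_one {m n : ℕ} (hm : m ≠ 1) (hn : n ≠ 1) :
    ∃ b c : Equiv.Perm ℂ, b ^ m = 1 ∧ c ^ n = 1 ∧ ¬Commute b c := by
  obtain ⟨ζ, hζ, hζm⟩ := Complex.exists_ne_one_pow_eq_one hm
  obtain ⟨ξ, hξ, hξn⟩ := Complex.exists_ne_one_pow_eq_one hn
  let scale := MulAction.toPermHom ℂˣ ℂ
  let c := MulAut.conj (Equiv.addLeft (1 : ℂ)) (scale ξ)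
  have hb : scale ζ ^ m = 1 := by rw [← map_pow, hζm, _root_.map_one]
  have hc : c ^ n = 1 := by rw [← map_pow, ← map_pow, hξn, _root_.map_one, _root_.map_one]
  refine ⟨scale ζ, c, hb, hc, fun hbc => ?_⟩
  have h0 := congrArg (· 0) hbc.eq
  simp only [c, scale, Equiv.Perm.mul_apply, MulAut.conj_apply, Equiv.Perm.inv_def,
    Equiv.addLeft_symm_apply, Equiv.coe_addLeft, MulAction.toPermHom_apply,
    MulAction.toPerm_apply, Units.smul_def, smul_eq_mul] at h0
  have h0' : ((ζ : ℂ) - 1) * (1 - ξ) = 0 := by linear_combination h0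
  rcases mul_eq_zero.mp h0' with h | h
  · exact hζ (Units.val_eq_one.mp (sub_eq_zero.mp h))
  · exact hξ (Units.val_eq_one.mp (sub_eq_zero.mp h).symm)

theorem stmt_12_general (p₄ p₅ : ℕ) (hp₄ : 2 ≤ p₄) (q₅ : ℤ)
    (h : IsPrimitiveF2
      ((((FreeGroup.of 1 : FreeGroup (Fin 2)) ^ p₅) * FreeGroup.of 0) ^ p₄ *
        (FreeGroup.of 1) ^ q₅)) :
    q₅ = 1 ∨ q₅ = -1 := by
  by_contra hq₅
  obtain ⟨b, c, hb, hc, hbc⟩ :=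
    exists_not_commute_pow_eq_one (m := q₅.natAbs) (n := p₄) (by omega) (by omega)
  exact not_isPrimitiveF2_of_not_commute hbc hc (pow_natAbs_eq_one.mp hb) p₅ h

/-- In the free group `⟨x,y⟩`, if `W(x,y) = (y^{p₅} x)^{p₄} y^{q₅}` with `p₄, p₅ ≥ 2`
is primitive, then `q₅ = ±1`. -/
theorem stmt_12 (p₄ p₅ : ℕ) (hp₄ : 2 ≤ p₄) (hp₅ : 2 ≤ p₅) (q₅ : ℤ)
    (h : IsPrimitiveF2
      ((((FreeGroup.of 1 : FreeGroup (Fin 2)) ^ p₅) * FreeGroup.of 0) ^ p₄ *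
        (FreeGroup.of 1) ^ q₅)) :
    q₅ = 1 ∨ q₅ = -1 :=
  stmt_12_general p₄ p₅ hp₄ q₅ h
end
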